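/- arXiv:2111.08586 — 2 statements merged into one kernel-verified Lean document; each statement's English description precedes it below -/
import Mathlib

section
/- Let D be odd and B ∈ S_D with E = 𝔼_B the corresponding subspace of V_D. If η_D := e_1 + e_3 + ... + e_D belongs to E, then |B| = (D+1)/2. -/
open Finset

abbrev Vec := ℕ →₀ ZMod 2

/-- The basis vector `e_i`. -/
noncomputable def e (i : ℕ) : Vec := Finsupp.single i 1

/-- For an interval `p = (a,b)` (representing `[a,b]`), the vector `e_I = ∑_{i∈[a,b]} e_i`. -/
noncomputable def eI (p : ℕ × ℕ) : Vec := ∑ j ∈ Finset.Icc p.1 p.2, e j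

/-- The map `ξ_i` on intervals. -/
def tint (i : ℕ) (p : ℕ × ℕ) : ℕ × ℕ :=
  if i ≤ p.1 then (p.1 + 2, p.2 + 2)
  else if p.2 + 2 ≤ i then p
  else (p.1, p.2 + 2)

/-- The map `t_i` on sets of intervals: `t_i(B') = ξ_i(B') ∪ {[i,i]}`. -/
def tmap (i : ℕ) (B : Finset (ℕ × ℕ)) : Finset (ℕ × ℕ) :=
  B.image (tint i) ∪ {(i, i)}

/-- The inductively defined family `S_D`. -/
inductive IsS : ℕ → Finset (ℕ × ℕ) → Prop
  | empty (D : ℕ) : IsS D ∅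
  | one : IsS 1 {(1, 1)}
  | step (D i : ℕ) (B' : Finset (ℕ × ℕ)) (h1 : 1 ≤ i) (h2 : i ≤ D + 2)
      (h : IsS D B') : IsS (D + 2) (tmap i B')

def primEven (D k : ℕ) : Finset (ℕ × ℕ) := (Finset.Icc 1 k).image fun j => (j, D + 1 - j)
def primOddA (D k : ℕ) : Finset (ℕ × ℕ) := (Finset.Icc 1 k).image fun j => (j, D - j)
def primOddB (D k : ℕ) : Finset (ℕ × ℕ) := (Finset.Icc 1 k).image fun j => (j + 1, D + 1 - j)

/-- The primitive elements of `𝕊_D`. -/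
def IsPrim (D : ℕ) (B : Finset (ℕ × ℕ)) : Prop :=
  B = ∅ ∨
  (Even D ∧ ∃ k, 1 ≤ k ∧ k ≤ D / 2 ∧ B = primEven D k) ∨
  (Odd D ∧ ∃ k, Odd k ∧ 1 ≤ k ∧ k ≤ (D - 1) / 2 ∧ (B = primOddA D k ∨ B = primOddB D k))

/-- The inductively defined family `𝕊_D`. -/
inductive IsSS : ℕ → Finset (ℕ × ℕ) → Prop
  | prim (D : ℕ) (B : Finset (ℕ × ℕ)) : IsPrim D B → IsSS D B
  | one : IsSS 1 {(1, 1)}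
  | step (D i : ℕ) (B' : Finset (ℕ × ℕ)) (h1 : 1 ≤ i) (h2 : i ≤ D + 2)
      (h : IsSS D B') : IsSS (D + 2) (tmap i B')

/-- The subspace `𝔼_B` spanned by the `e_I`, `I ∈ B`. -/
noncomputable def EB (B : Finset (ℕ × ℕ)) : Submodule (ZMod 2) Vec :=
  Submodule.span (ZMod 2) (eI '' (B : Set (ℕ × ℕ)))

/-- Two intervals are non-touching. -/
def Nontouch (p q : ℕ × ℕ) : Prop := p.2 + 2 ≤ q.1 ∨ q.2 + 2 ≤ p.1

/-- `p ≺ q`: `p = [a,b]` is strictly nested inside `q = [a',b']`, i.e. `a' < a ≤ b < b'`. -/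
def Nested (p q : ℕ × ℕ) : Prop := q.1 < p.1 ∧ p.1 ≤ p.2 ∧ p.2 < q.2

/-- `η_D = e_1 + e_3 + ⋯ + e_D` (`D` odd). -/
noncomputable def eta (D : ℕ) : Vec := ∑ j ∈ (Finset.Icc 1 D).filter (fun j => j % 2 = 1), e j

noncomputable def Tfun (i k : ℕ) : Vec :=
  if k + 1 < i then e k
  else if k + 1 = i then e k + e (k + 1) + e (k + 2)
  else e (k + 2)

/-- The linear map `T_i : V_{D-2} → V_D`. -/
noncomputable def Tlin (i : ℕ) : Vec →ₗ[ZMod 2] Vec :=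
  Finsupp.linearCombination (ZMod 2) (Tfun i)

/-- The inductively defined family `𝒻(V_D)` of subspaces. -/
inductive IsF : ℕ → Submodule (ZMod 2) Vec → Prop
  | zero (D : ℕ) : IsF D ⊥
  | one : IsF 1 (Submodule.span (ZMod 2) {e 1})
  | step (D i : ℕ) (E' : Submodule (ZMod 2) Vec) (h1 : 1 ≤ i) (h2 : i ≤ D + 2)
      (h : IsF D E') :
      IsF (D + 2) (Submodule.map (Tlin i) E' ⊔ Submodule.span (ZMod 2) {e i})

/-- The subspace `V_D = ⟨e_1,…,e_D⟩`. -/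
noncomputable def VD (D : ℕ) : Submodule (ZMod 2) Vec :=
  Submodule.span (ZMod 2) (e '' Set.Icc 1 D)

/-- The symplectic form with `(e_i,e_j) = 1` iff `|i-j| = 1`. -/
noncomputable def symp (x y : Vec) : ZMod 2 :=
  x.sum fun i xi => xi * (y (i + 1) + if 1 ≤ i then y (i - 1) else 0)

/-!
`η_{D+2} = T_i η_D + e_i` and `𝔼_{t_i B'} ⊆ T_i 𝔼_{B'} + ⟨e_i⟩`, while `T_i` has a left inverse
vanishing on `e_i`. Hence `η_{D+2} ∈ 𝔼_{t_i B'}` forces `η_D ∈ 𝔼_{B'}`, and since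
`|t_i B'| = |B'| + 1` the count follows by induction along the construction of `B ∈ S_D`; the
base case `B = ∅` cannot occur because `η_D ≠ 0`.
-/

lemma e_apply (j m : ℕ) : e j m = if j = m then 1 else 0 := by
  simp [e, Finsupp.single_apply]

lemma sum_e_apply (s : Finset ℕ) (m : ℕ) :
    (∑ j ∈ s, e j) m = if m ∈ s then 1 else 0 := by
  rw [Finset.sum_apply']
  simp only [e_apply]
  exact Finset.sum_ite_eq' s m fun _ => 1

lemma eI_apply (p : ℕ × ℕ) (m : ℕ) : eI p m = if p.1 ≤ m ∧ m ≤ p.2 then 1 else 0 := by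
  simp only [eI, sum_e_apply, Finset.mem_Icc]

lemma eI_self (i : ℕ) : eI (i, i) = e i := by
  simp [eI]

lemma eta_apply (D m : ℕ) : eta D m = if 1 ≤ m ∧ m ≤ D ∧ m % 2 = 1 then 1 else 0 := by
  simp [eta, sum_e_apply, Finset.mem_Icc, and_assoc]

lemma eta_ne_zero {D : ℕ} (hD : 1 ≤ D) : eta D ≠ 0 := fun h => by
  simpa [eta_apply, hD] using DFunLike.congr_fun h 1

section Twist

variable {i : ℕ}

lemma Tlin_e (i j : ℕ) : Tlin i (e j) = Tfun i j := by
  simp [Tlin, e, Finsupp.linearCombination_single]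

lemma Tlin_sum_e (i : ℕ) (s : Finset ℕ) : Tlin i (∑ j ∈ s, e j) = ∑ j ∈ s, Tfun i j := by
  simp only [map_sum, Tlin_e]

lemma Tfun_apply (hi : 1 ≤ i) (j m : ℕ) :
    Tfun i j m = (if j = m then (if m + 1 < i then 1 else 0) else 0)
      + (if j = i - 1 then (if m = i - 1 ∨ m = i ∨ m = i + 1 then 1 else 0) else 0)
      + (if j = m - 2 then (if i + 2 ≤ m then 1 else 0) else 0) := by
  rw [Tfun]
  split_ifs <;> simp only [Finsupp.add_apply, e_apply] <;> split_ifs <;> first | decide | omega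

lemma sum_Tfun_apply (hi : 1 ≤ i) (s : Finset ℕ) (m : ℕ) :
    (∑ j ∈ s, Tfun i j) m =
      (if m ∈ s then (if m + 1 < i then 1 else 0) else 0)
      + (if i - 1 ∈ s then (if m = i - 1 ∨ m = i ∨ m = i + 1 then 1 else 0) else 0)
      + (if m - 2 ∈ s then (if i + 2 ≤ m then 1 else 0) else 0) := by
  rw [Finset.sum_apply', Finset.sum_congr rfl fun j _ => Tfun_apply hi j m,
    Finset.sum_add_distrib, Finset.sum_add_distrib,
    Finset.sum_ite_eq' s m, Finset.sum_ite_eq' s (i - 1), Finset.sum_ite_eq' s (m - 2)]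

lemma eta_add_two_eq {D : ℕ} (hD : Odd D) (h1 : 1 ≤ i) (h2 : i ≤ D + 2) :
    eta (D + 2) = Tlin i (eta D) + e i := by
  rw [Nat.odd_iff] at hD
  ext m
  rw [Finsupp.add_apply, eta_apply, eta, Tlin_sum_e, sum_Tfun_apply h1, e_apply]
  simp only [Finset.mem_filter, Finset.mem_Icc]
  split_ifs <;> first | decide | omega

lemma Tlin_eI (hi : 1 ≤ i) {p : ℕ × ℕ} (hp : p.1 ≤ p.2) : Tlin i (eI p) = eI (tint i p) := by
  rw [eI, Tlin_sum_e, tint]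
  split_ifs <;>
  · ext m
    rw [sum_Tfun_apply hi, eI_apply]
    simp only [Finset.mem_Icc]
    split_ifs <;> first | decide | omega

/-- A left inverse of `T_i`: it undoes the shift by two above `i` and kills `e_i`, `e_{i+1}`. -/
noncomputable def Sfun (i m : ℕ) : Vec :=
  if m < i then e m else if m ≤ i + 1 then 0 else e (m - 2)

noncomputable def Slin (i : ℕ) : Vec →ₗ[ZMod 2] Vec :=
  Finsupp.linearCombination (ZMod 2) (Sfun i)

lemma Slin_e (i j : ℕ) : Slin i (e j) = Sfun i j := by
  simp [Slin, e, Finsupp.linearCombination_single]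

lemma Slin_e_self (i : ℕ) : Slin i (e i) = 0 := by
  rw [Slin_e, Sfun, if_neg (by omega), if_pos (by omega)]

lemma Slin_Tfun (i k : ℕ) : Slin i (Tfun i k) = e k := by
  rw [Tfun]
  split_ifs with h1 h2
  · rw [Slin_e, Sfun, if_pos (by omega)]
  · rw [map_add, map_add, Slin_e, Slin_e, Slin_e, Sfun, Sfun, Sfun,
      if_pos (by omega), if_neg (by omega), if_pos (by omega), if_neg (by omega),
      if_pos (by omega), add_zero, add_zero]
  · rw [Slin_e, Sfun, if_neg (by omega), if_neg (by omega), Nat.add_sub_cancel]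

lemma Slin_comp_Tlin (i : ℕ) : Slin i ∘ₗ Tlin i = LinearMap.id :=
  Finsupp.lhom_ext fun k c => by
    rw [LinearMap.comp_apply, ← mul_one c, ← smul_eq_mul, ← Finsupp.smul_single, map_smul,
      map_smul, ← e, Tlin_e, Slin_Tfun, LinearMap.id_apply, e]

lemma Slin_Tlin (i : ℕ) (v : Vec) : Slin i (Tlin i v) = v :=
  LinearMap.congr_fun (Slin_comp_Tlin i) v

end Twist

lemma IsS.one_le_fst_le_snd {D : ℕ} {B : Finset (ℕ × ℕ)} (hB : IsS D B) :
    ∀ p ∈ B, 1 ≤ p.1 ∧ p.1 ≤ p.2 := by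
  induction hB with
  | empty D => simp
  | one => simp
  | step D i B' h1 h2 hB' ih =>
    intro p hp
    rcases Finset.mem_union.mp hp with hp | hp
    · obtain ⟨q, hq, rfl⟩ := Finset.mem_image.mp hp
      have := ih q hq
      unfold tint
      split_ifs <;> omega
    · rw [Finset.mem_singleton.mp hp]
      exact ⟨h1, le_rfl⟩

section tmap

variable {i : ℕ} {B' : Finset (ℕ × ℕ)}

lemma tint_injOn (hv : ∀ p ∈ B', 1 ≤ p.1 ∧ p.1 ≤ p.2) : Set.InjOn (tint i) B' := by
  rintro ⟨a, b⟩ hp ⟨c, d⟩ hq h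
  have hab := hv _ hp
  have hcd := hv _ hq
  simp only [tint] at h hab hcd
  split_ifs at h <;> simp only [Prod.mk.injEq] at h ⊢ <;> omega

lemma mk_self_notMem_image_tint (hv : ∀ p ∈ B', 1 ≤ p.1 ∧ p.1 ≤ p.2) :
    (i, i) ∉ B'.image (tint i) := by
  simp only [Finset.mem_image, not_exists, not_and]
  rintro ⟨a, b⟩ hp h
  have hab := hv _ hp
  simp only [tint] at h hab
  split_ifs at h <;> simp only [Prod.mk.injEq] at h <;> omega

lemma card_tmap (hv : ∀ p ∈ B', 1 ≤ p.1 ∧ p.1 ≤ p.2) :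
    (tmap i B').card = B'.card + 1 := by
  rw [tmap, Finset.card_union_of_disjoint
      (Finset.disjoint_singleton_right.mpr (mk_self_notMem_image_tint hv)),
    Finset.card_image_of_injOn (tint_injOn hv), Finset.card_singleton]

lemma EB_tmap_le (hi : 1 ≤ i) (hv : ∀ p ∈ B', 1 ≤ p.1 ∧ p.1 ≤ p.2) :
    EB (tmap i B') ≤ (EB B').map (Tlin i) ⊔ Submodule.span (ZMod 2) {e i} := by
  refine Submodule.span_le.mpr ?_
  rintro _ ⟨q, hq, rfl⟩
  rcases Finset.mem_union.mp hq with hq | hq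
  · obtain ⟨p, hp, rfl⟩ := Finset.mem_image.mp hq
    rw [← Tlin_eI hi (hv p hp).2]
    exact Submodule.mem_sup_left <|
      Submodule.mem_map_of_mem <| Submodule.subset_span ⟨p, hp, rfl⟩
  · rw [Finset.mem_singleton.mp hq, eI_self]
    exact Submodule.mem_sup_right <| Submodule.mem_span_singleton_self _

lemma eta_mem_EB_of_eta_add_two_mem_EB_tmap {D : ℕ} (hD : Odd D) (h1 : 1 ≤ i)
    (h2 : i ≤ D + 2) (hv : ∀ p ∈ B', 1 ≤ p.1 ∧ p.1 ≤ p.2)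
    (h : eta (D + 2) ∈ EB (tmap i B')) : eta D ∈ EB B' := by
  obtain ⟨_, ⟨x, hx, rfl⟩, _, hz, hsum⟩ := Submodule.mem_sup.mp (EB_tmap_le h1 hv h)
  obtain ⟨c, rfl⟩ := Submodule.mem_span_singleton.mp hz
  have hx_eq : x = eta D := by
    have := congrArg (Slin i) hsum
    rwa [eta_add_two_eq hD h1 h2, map_add, map_add, map_smul, Slin_Tlin, Slin_Tlin,
      Slin_e_self, smul_zero, add_zero, add_zero] at this
  exact hx_eq ▸ hx

end tmap

/-- `D` odd, `B ∈ S_D`, `η_D ∈ 𝔼_B` implies `|B| = (D+1)/2`. -/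
theorem stmt7 (D : ℕ) (hD : Odd D) (B : Finset (ℕ × ℕ)) (hB : IsS D B)
    (h : eta D ∈ EB B) : B.card = (D + 1) / 2 := by
  induction hB with
  | empty D =>
    simp only [EB, Finset.coe_empty, Set.image_empty, Submodule.span_empty,
      Submodule.mem_bot] at h
    exact absurd h (eta_ne_zero hD.pos)
  | one => rfl
  | step D i B' h1 h2 hB' ih =>
    have hD' : Odd D := by simpa [Nat.odd_add] using hD
    have hv := hB'.one_le_fst_le_snd
    rw [card_tmap hv, ih hD' (eta_mem_EB_of_eta_add_two_mem_EB_tmap hD' h1 h2 hv h)]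
    omega
end

section
/- Let D be odd and B ∈ S_D with |B| < (D−1)/2 and σ = ∪_{I∈B} I. Then there exist x < y < z in [1,D] \ σ with x, z odd and y even. -/
open Finset

/-!
Induct along the construction of `S_D`. For `B = ∅` the bound forces `D ≥ 3`, and `1 < 2 < 3`
works. The step `B = t_i B'` adds one interval, so `|B'|` satisfies the bound for `D - 2`; and
the map `c ↦ c` for `c < i`, `c ↦ c + 2` for `c ≥ i` is strictly monotone, preserves parity,
maps `[1, D - 2]` into `[1, D]` and sends points outside `σ(B')` to points outside `σ(B)`,
so it carries a witness triple for `B'` to one for `B`.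
-/

open Finset

/-- The union `σ` of the intervals in `B`. -/
def cover (B : Finset (ℕ × ℕ)) : Finset ℕ := B.biUnion fun p => Icc p.1 p.2

def HasParityGap (D : ℕ) (B : Finset (ℕ × ℕ)) : Prop :=
  ∃ x y z : ℕ, x < y ∧ y < z ∧ Odd x ∧ Even y ∧ Odd z ∧
    x ∈ Icc 1 D ∧ y ∈ Icc 1 D ∧ z ∈ Icc 1 D ∧ x ∉ cover B ∧ y ∉ cover B ∧ z ∉ cover B

lemma card_tmap_s11 (i : ℕ) (B : Finset (ℕ × ℕ)) : (tmap i B).card = B.card + 1 := by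
  have hinj : Set.InjOn (tint i) B := by
    rintro ⟨a, b⟩ - ⟨c, d⟩ - hpq
    simp only [tint] at hpq
    split_ifs at hpq <;> simp only [Prod.ext_iff] at hpq ⊢ <;> omega
  have hnew : (i, i) ∉ B.image (tint i) := by
    simp only [mem_image, not_exists, not_and]
    rintro ⟨a, b⟩ - hab
    simp only [tint] at hab
    split_ifs at hab <;> simp only [Prod.ext_iff] at hab <;> omega
  rw [tmap, union_comm, ← insert_eq, card_insert_of_notMem hnew, card_image_of_injOn hinj]

/-- How `t_i` relabels positions: two new positions are inserted just before `i`. -/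
def skipAt (i c : ℕ) : ℕ := if c < i then c else c + 2

lemma skipAt_strictMono (i : ℕ) : StrictMono (skipAt i) := by
  intro a b hab
  simp only [skipAt]
  split_ifs <;> omega

lemma even_skipAt_iff (i c : ℕ) : Even (skipAt i c) ↔ Even c := by
  unfold skipAt
  split_ifs
  · rfl
  · exact Nat.even_add.trans (iff_true_right even_two)

lemma odd_skipAt_iff (i c : ℕ) : Odd (skipAt i c) ↔ Odd c := by
  simpa only [Nat.not_even_iff_odd] using (even_skipAt_iff i c).not

lemma skipAt_mem_Icc {i D c : ℕ} (hc : c ∈ Icc 1 D) : skipAt i c ∈ Icc 1 (D + 2) := by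
  simp only [mem_Icc, skipAt] at hc ⊢
  split_ifs <;> omega

lemma skipAt_notMem_cover_tmap {i c : ℕ} {B : Finset (ℕ × ℕ)} (hc : c ∉ cover B) :
    skipAt i c ∉ cover (tmap i B) := by
  simp only [cover, tmap, mem_biUnion, mem_union, mem_image, mem_singleton, mem_Icc,
    not_exists, not_and] at hc ⊢
  rintro _ (⟨p, hp, rfl⟩ | rfl)
  · have := hc p hp
    simp only [tint, skipAt]
    split_ifs <;> omega
  · simp only [skipAt]
    split_ifs <;> omega

lemma HasParityGap.tmap {D : ℕ} {B : Finset (ℕ × ℕ)} (hB : HasParityGap D B) (i : ℕ) :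
    HasParityGap (D + 2) (tmap i B) := by
  obtain ⟨x, y, z, hxy, hyz, hx, hy, hz, hxD, hyD, hzD, hxB, hyB, hzB⟩ := hB
  exact ⟨skipAt i x, skipAt i y, skipAt i z, skipAt_strictMono i hxy, skipAt_strictMono i hyz,
    (odd_skipAt_iff i x).2 hx, (even_skipAt_iff i y).2 hy, (odd_skipAt_iff i z).2 hz,
    skipAt_mem_Icc hxD, skipAt_mem_Icc hyD, skipAt_mem_Icc hzD,
    skipAt_notMem_cover_tmap hxB, skipAt_notMem_cover_tmap hyB, skipAt_notMem_cover_tmap hzB⟩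

lemma hasParityGap_empty {D : ℕ} (hD : 3 ≤ D) : HasParityGap D ∅ :=
  ⟨1, 2, 3, by norm_num, by norm_num, odd_one, even_two, by decide,
    by simp only [mem_Icc]; omega, by simp only [mem_Icc]; omega, by simp only [mem_Icc]; omega,
    by simp [cover], by simp [cover], by simp [cover]⟩

lemma IsS.hasParityGap {D : ℕ} {B : Finset (ℕ × ℕ)} (hB : IsS D B)
    (hcard : B.card < (D - 1) / 2) : HasParityGap D B := by
  induction hB with
  | empty D => exact hasParityGap_empty (by omega)
  | one => simp at hcard
  | step D i B' _ _ _ ih =>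
    rw [card_tmap_s11] at hcard
    exact (ih (by omega)).tmap i

theorem stmt11_general (D : ℕ) (B : Finset (ℕ × ℕ)) (hB : IsS D B)
    (h : B.card < (D - 1) / 2) :
    ∃ x y z : ℕ, x < y ∧ y < z ∧ Odd x ∧ Even y ∧ Odd z ∧
      x ∈ Finset.Icc 1 D ∧ y ∈ Finset.Icc 1 D ∧ z ∈ Finset.Icc 1 D ∧
      x ∉ B.biUnion (fun p => Finset.Icc p.1 p.2) ∧
      y ∉ B.biUnion (fun p => Finset.Icc p.1 p.2) ∧
      z ∉ B.biUnion (fun p => Finset.Icc p.1 p.2) :=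
  hB.hasParityGap h

/-- `D` odd, `B ∈ S_D`, `|B| < (D−1)/2` implies there are `x < y < z`
in `[1,D] \ σ` with `x, z` odd and `y` even. -/
theorem stmt11 (D : ℕ) (hD : Odd D) (B : Finset (ℕ × ℕ)) (hB : IsS D B)
    (h : B.card < (D - 1) / 2) :
    ∃ x y z : ℕ, x < y ∧ y < z ∧ Odd x ∧ Even y ∧ Odd z ∧
      x ∈ Finset.Icc 1 D ∧ y ∈ Finset.Icc 1 D ∧ z ∈ Finset.Icc 1 D ∧
      x ∉ B.biUnion (fun p => Finset.Icc p.1 p.2) ∧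
      y ∉ B.biUnion (fun p => Finset.Icc p.1 p.2) ∧
      z ∉ B.biUnion (fun p => Finset.Icc p.1 p.2) :=
  stmt11_general D B hB h
end
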